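/- Let p be a polynomial in n real variables that can be written as the sum of a univariate polynomial in x_1 and a quadratic polynomial in x_1, …, x_n. If p(x) ≥ 0 for all x ∈ ℝⁿ, then p can be written as p(x) = u(x_1) + q(x), where u is a univariate polynomial with u(t) ≥ 0 for all t ∈ ℝ and q is a polynomial of degree at most 2 with q(x) ≥ 0 for all x ∈ ℝⁿ. -/
import Mathlib

open MvPolynomial

/-- A univariate quadratic with negative leading coefficient takes negative values. -/
private lemma neg_lead_quadratic_neg (a b c : ℝ) (ha : a < 0) :
    ∃ t : ℝ, c + b * t + a * t ^ 2 < 0 := by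
  refine ⟨max 1 ((|b| + |c| + 1) / (-a)), ?_⟩
  set t := max 1 ((|b| + |c| + 1) / (-a)) with ht
  have h1 : (1 : ℝ) ≤ t := le_max_left _ _
  have h2 : (|b| + |c| + 1) / (-a) ≤ t := le_max_right _ _
  have h3 : (|b| + |c| + 1) ≤ (-a) * t := by
    rw [div_le_iff₀ (by linarith)] at h2
    linarith [h2]
  have hb := le_abs_self b
  have hb' := neg_abs_le b
  have hc := le_abs_self c
  nlinarith [abs_nonneg b, abs_nonneg c]

/-- If `c + b * t ≥ 0` for all `t`, then `b = 0`. -/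
private lemma linear_nonneg_coeff_zero (b c : ℝ) (h : ∀ t : ℝ, 0 ≤ c + b * t) : b = 0 := by
  by_contra hb
  have := h ((-c - 1) / b)
  rw [mul_div_cancel₀ _ hb] at this
  linarith

private lemma eq_C_of_totalDegree_eq_zero {σ : Type*} (p : MvPolynomial σ ℝ)
    (h : p.totalDegree = 0) : p = C (coeff 0 p) := by
  classical
  rw [MvPolynomial.totalDegree_eq_zero_iff] at h
  ext m
  by_cases hm : m = 0
  · subst hm; simp
  · rw [coeff_C, if_neg (Ne.symm hm)]
    by_contra hc
    exact hm (Finsupp.ext fun x => h m (mem_support_iff.2 hc) x)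

private lemma quad_eval (P : Polynomial ℝ) (hP : P.natDegree ≤ 2) (t : ℝ) :
    P.eval t = P.coeff 0 + P.coeff 1 * t + P.coeff 2 * t ^ 2 := by
  rw [Polynomial.eval_eq_sum_range' (Nat.lt_succ_of_le hP)]
  simp [Finset.sum_range_succ]

/-- Main inductive lemma: the distinguished variable is `Fin.last n`. -/
private lemma aux : ∀ (n : ℕ) (u : Polynomial ℝ) (q : MvPolynomial (Fin (n + 1)) ℝ),
    q.totalDegree ≤ 2 →
    (∀ x : Fin (n + 1) → ℝ, 0 ≤ Polynomial.eval (x (Fin.last n)) u + eval x q) →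
    ∃ (u' : Polynomial ℝ) (q' : MvPolynomial (Fin (n + 1)) ℝ),
      q'.totalDegree ≤ 2 ∧ (∀ t : ℝ, 0 ≤ u'.eval t) ∧ (∀ x, 0 ≤ eval x q') ∧
      (∀ x : Fin (n + 1) → ℝ, Polynomial.eval (x (Fin.last n)) u + eval x q
          = Polynomial.eval (x (Fin.last n)) u' + eval x q') := by
  intro n
  induction n with
  | zero =>
    intro u q hq hnn
    -- one variable: everything is univariate
    set w : Polynomial ℝ := Polynomial.map (eval (fun i : Fin 0 => (0:ℝ))) (finSuccEquiv ℝ 0 q)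
      with hw
    have hev : ∀ x : Fin 1 → ℝ, eval x q = w.eval (x 0) := by
      intro x
      have hx : x = Fin.cons (x 0) (fun i : Fin 0 => (0:ℝ)) := by
        funext i
        refine Fin.cases ?_ (fun i => i.elim0) i
        simp
      conv_lhs => rw [hx]
      rw [eval_eq_eval_mv_eval']
    refine ⟨u + w, 0, by simp, ?_, by simp, ?_⟩
    · intro t
      have := hnn (fun _ => t)
      simpa [hev (fun _ => t), Fin.last] using this
    · intro x
      have h0 : Fin.last 0 = 0 := rfl
      simp [h0, hev x]
  | succ n IH =>
    intro u q hq hnn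
    set Q := finSuccEquiv ℝ (n + 1) q with hQ
    have hQdeg : Q.natDegree ≤ 2 := by
      rw [hQ, natDegree_finSuccEquiv]
      exact le_trans (degreeOf_le_totalDegree q 0) hq
    set B := Q.coeff 1 with hB
    set Cc := Q.coeff 0 with hCc
    have hBdeg : B.totalDegree ≤ 1 := by
      by_cases h : B = 0
      · simp [h]
      · rw [hB, hQ] at h ⊢
        have := totalDegree_coeff_finSuccEquiv_add_le q 1 h
        omega
    have hCdeg : Cc.totalDegree ≤ 2 := by
      by_cases h : Cc = 0
      · simp [h]
      · rw [hCc, hQ] at h ⊢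
        have := totalDegree_coeff_finSuccEquiv_add_le q 0 h
        omega
    have hAdeg : (Q.coeff 2).totalDegree = 0 := by
      by_cases h : Q.coeff 2 = 0
      · simp [h]
      · rw [hQ] at h ⊢
        have := totalDegree_coeff_finSuccEquiv_add_le q 2 h
        omega
    set a : ℝ := coeff 0 (Q.coeff 2) with ha
    have hA : Q.coeff 2 = C a := eq_C_of_totalDegree_eq_zero _ hAdeg
    -- evaluation formula
    have hev : ∀ (t : ℝ) (y : Fin (n + 1) → ℝ),
        eval (Fin.cons t y) q = eval y Cc + eval y B * t + a * t ^ 2 := by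
      intro t y
      rw [eval_eq_eval_mv_eval', quad_eval _ (le_trans Polynomial.natDegree_map_le
        (by rw [← hQ]; exact hQdeg))]
      simp [Polynomial.coeff_map, ← hQ, ← hB, ← hCc, hA]
    have hlast : ∀ (t : ℝ) (y : Fin (n + 1) → ℝ),
        (Fin.cons t y : Fin (n + 2) → ℝ) (Fin.last (n + 1)) = y (Fin.last n) := by
      intro t y
      rw [← Fin.succ_last, Fin.cons_succ]
    have hcons : ∀ x : Fin (n + 2) → ℝ, x = Fin.cons (x 0) (Fin.tail x) :=
      fun x => (Fin.cons_self_tail x).symm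
    rcases lt_trichotomy a 0 with hneg | hzero | hpos
    · -- negative leading coefficient: contradiction
      exfalso
      obtain ⟨t, ht⟩ := neg_lead_quadratic_neg a (eval (fun _ => 0) B)
        (Polynomial.eval ((fun _ => (0:ℝ)) (Fin.last n)) u + eval (fun _ => 0) Cc) hneg
      have := hnn (Fin.cons t (fun _ => 0))
      rw [hev t (fun _ => 0), hlast t (fun _ => 0)] at this
      linarith
    · -- a = 0 : B must vanish identically
      have hB0 : ∀ y : Fin (n + 1) → ℝ, eval y B = 0 := by
        intro y
        apply linear_nonneg_coeff_zero (eval y B)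
          (Polynomial.eval (y (Fin.last n)) u + eval y Cc)
        intro t
        have := hnn (Fin.cons t y)
        rw [hev t y, hlast t y, hzero] at this
        linarith
      obtain ⟨u', q'', hq''deg, hu'nn, hq''nn, heq⟩ := IH u Cc hCdeg (by
        intro y
        have := hnn (Fin.cons 0 y)
        rw [hev 0 y, hlast 0 y, hB0 y] at this
        simpa using this)
      refine ⟨u', rename Fin.succ q'', le_trans (totalDegree_rename_le _ _) hq''deg,
        hu'nn, ?_, ?_⟩
      · intro x
        rw [eval_rename]
        exact hq''nn _
      · intro x
        have hx := hcons x
        rw [eval_rename]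
        conv_lhs => rw [hx, hev (x 0) (Fin.tail x), hlast (x 0) (Fin.tail x)]
        rw [hB0, hzero]
        have := heq (Fin.tail x)
        have htail : (x ∘ Fin.succ : Fin (n+1) → ℝ) = Fin.tail x := rfl
        have hxl : x (Fin.last (n + 1)) = Fin.tail x (Fin.last n) := by
          conv_lhs => rw [hx, hlast (x 0) (Fin.tail x)]
        rw [htail, hxl]
        linarith [this]
    · -- a > 0 : complete the square
      set E : MvPolynomial (Fin (n + 1)) ℝ := Cc - C (1 / (4 * a)) * B ^ 2 with hE
      have hEdeg : E.totalDegree ≤ 2 := by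
        rw [hE, sub_eq_add_neg]
        refine le_trans (totalDegree_add _ _) (max_le hCdeg ?_)
        rw [totalDegree_neg]
        refine le_trans (totalDegree_mul _ _) ?_
        rw [totalDegree_C]
        have := totalDegree_pow B 2
        omega
      have hEev : ∀ y : Fin (n + 1) → ℝ,
          eval y E = eval y Cc - 1 / (4 * a) * (eval y B) ^ 2 := by
        intro y; rw [hE]; simp
      obtain ⟨u', q'', hq''deg, hu'nn, hq''nn, heq⟩ := IH u E hEdeg (by
        intro y
        have := hnn (Fin.cons (-(eval y B) / (2 * a)) y)
        rw [hev _ y, hlast _ y] at this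
        rw [hEev y]
        have harith : eval y Cc + eval y B * (-(eval y B) / (2 * a))
            + a * (-(eval y B) / (2 * a)) ^ 2
            = eval y Cc - 1 / (4 * a) * (eval y B) ^ 2 := by
          field_simp
          ring
        rw [harith] at this
        linarith)
      set s : MvPolynomial (Fin (n + 2)) ℝ :=
        C a * (X 0 + C (1 / (2 * a)) * rename Fin.succ B) ^ 2 with hs
      have hsdeg : s.totalDegree ≤ 2 := by
        rw [hs]
        refine le_trans (totalDegree_mul _ _) ?_
        rw [totalDegree_C]
        have hinner : (X 0 + C (1 / (2 * a)) * rename Fin.succ B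
            : MvPolynomial (Fin (n + 2)) ℝ).totalDegree ≤ 1 := by
          refine le_trans (totalDegree_add _ _) (max_le (le_of_eq (totalDegree_X _)) ?_)
          refine le_trans (totalDegree_mul _ _) ?_
          rw [totalDegree_C]
          simpa using le_trans (totalDegree_rename_le _ _) hBdeg
        have := totalDegree_pow (X 0 + C (1 / (2 * a)) * rename Fin.succ B
            : MvPolynomial (Fin (n + 2)) ℝ) 2
        omega
      have hsev : ∀ x : Fin (n + 2) → ℝ,
          eval x s = a * (x 0 + 1 / (2 * a) * eval (Fin.tail x) B) ^ 2 := by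
        intro x
        rw [hs]
        have htail : (x ∘ Fin.succ : Fin (n+1) → ℝ) = Fin.tail x := rfl
        simp [eval_rename, htail]
      refine ⟨u', rename Fin.succ q'' + s, ?_, hu'nn, ?_, ?_⟩
      · refine le_trans (totalDegree_add _ _)
          (max_le (le_trans (totalDegree_rename_le _ _) hq''deg) hsdeg)
      · intro x
        rw [map_add, eval_rename, hsev x]
        have := hq''nn (x ∘ Fin.succ)
        positivity
      · intro x
        have hx := hcons x
        rw [map_add, eval_rename, hsev x]
        conv_lhs => rw [hx, hev (x 0) (Fin.tail x), hlast (x 0) (Fin.tail x)]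
        have := heq (Fin.tail x)
        rw [hEev (Fin.tail x)] at this
        have htail : (x ∘ Fin.succ : Fin (n+1) → ℝ) = Fin.tail x := rfl
        have hxl : x (Fin.last (n + 1)) = Fin.tail x (Fin.last n) := by
          conv_lhs => rw [hx, hlast (x 0) (Fin.tail x)]
        rw [htail, hxl]
        have harith : eval (Fin.tail x) B * x 0 + a * x 0 ^ 2
            = -(1 / (4 * a) * (eval (Fin.tail x) B) ^ 2)
              + a * (x 0 + 1 / (2 * a) * eval (Fin.tail x) B) ^ 2 := by
          field_simp
          ring
        linarith [this, harith]

private lemma eval_aeval_X {n : ℕ} (x : Fin n → ℝ) (i : Fin n) (u : Polynomial ℝ) :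
    eval x (Polynomial.aeval (X i : MvPolynomial (Fin n) ℝ) u) = u.eval (x i) := by
  have h := Polynomial.aeval_algHom_apply (MvPolynomial.aeval x) (X i : MvPolynomial (Fin n) ℝ) u
  simp only [aeval_X] at h
  have h2 : (MvPolynomial.aeval x) ((Polynomial.aeval (X i : MvPolynomial (Fin n) ℝ)) u)
      = eval x ((Polynomial.aeval (X i : MvPolynomial (Fin n) ℝ)) u) := by
    rw [← MvPolynomial.coe_aeval_eq_eval]
    rfl
  rw [← h2, ← h, Polynomial.aeval_def]
  simp [Polynomial.eval₂_eq_eval_map]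

theorem nonneg_univariate_plus_quadratic_decomposition {n : ℕ} (hn : 0 < n)
    (p : MvPolynomial (Fin n) ℝ) (u : Polynomial ℝ) (q : MvPolynomial (Fin n) ℝ)
    (hq : q.totalDegree ≤ 2)
    (hp : p = Polynomial.aeval (MvPolynomial.X (⟨0, hn⟩ : Fin n)) u + q)
    (hnn : ∀ x : Fin n → ℝ, 0 ≤ eval x p) :
    ∃ (u' : Polynomial ℝ) (q' : MvPolynomial (Fin n) ℝ),
      q'.totalDegree ≤ 2 ∧
      (∀ t : ℝ, 0 ≤ u'.eval t) ∧
      (∀ x : Fin n → ℝ, 0 ≤ eval x q') ∧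
      p = Polynomial.aeval (MvPolynomial.X (⟨0, hn⟩ : Fin n)) u' + q' := by
  rcases n with _ | m
  · omega
  have h0 : (⟨0, hn⟩ : Fin (m + 1)) = 0 := rfl
  set σ : Equiv.Perm (Fin (m + 1)) := Equiv.swap 0 (Fin.last m) with hσ
  have hσσ : ∀ i, σ (σ i) = i := fun i => Equiv.swap_apply_self _ _ i
  have hevp : ∀ x : Fin (m + 1) → ℝ, eval x p = u.eval (x 0) + eval x q := by
    intro x
    rw [hp, map_add, eval_aeval_X, h0]
  obtain ⟨u', q'', hdeg, hu'nn, hq''nn, heq⟩ := aux m u (rename σ q)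
    (le_trans (totalDegree_rename_le _ _) hq) (by
      intro x
      rw [eval_rename]
      have h1 : (x ∘ σ : Fin (m+1) → ℝ) 0 = x (Fin.last m) := by
        simp [hσ, Function.comp, Equiv.swap_apply_left]
      have := hnn (x ∘ σ)
      rw [hevp (x ∘ σ), h1] at this
      exact this)
  refine ⟨u', rename σ q'', le_trans (totalDegree_rename_le _ _) hdeg, hu'nn, ?_, ?_⟩
  · intro x
    rw [eval_rename]
    exact hq''nn _
  · apply MvPolynomial.funext
    intro x
    have h2 := heq (x ∘ σ)
    have h3 : ∀ r : MvPolynomial (Fin (m+1)) ℝ, eval (x ∘ σ) (rename σ r) = eval x r := by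
      intro r
      rw [eval_rename]
      have hxx : ((x ∘ σ) ∘ σ : Fin (m+1) → ℝ) = x := funext fun i => congrArg x (hσσ i)
      rw [hxx]
    rw [h3 q] at h2
    have h4 : (x ∘ σ : Fin (m+1) → ℝ) (Fin.last m) = x 0 := by
      simp [hσ, Function.comp, Equiv.swap_apply_right]
    rw [h4] at h2
    rw [hevp x, h2, map_add, eval_aeval_X, h0, eval_rename]
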